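/- arXiv:1603.06727 — 6 statements merged into one kernel-verified Lean document; each statement's English description precedes it below -/
import Mathlib

section
/- For all θ ∈ (-π, π), the series ∑_{n=2}^{∞} (-1)^n · cos(nθ)/(n² - 1) converges and ∑_{n=2}^{∞} (-1)^n cos(nθ)/(n²-1) = 1/2 - (1/4) cos θ - (θ/2) sin θ. -/
open Real Complex intervalIntegral

noncomputable def Ei (m : ℤ) : ℂ := ∫ x in (-π:ℝ)..π, Complex.exp (m * x * I)
noncomputable def Ki (m : ℤ) : ℂ := ∫ x in (-π:ℝ)..π, (x:ℂ) * Complex.exp (m * x * I)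
noncomputable def f₀ : ℝ → ℂ := fun x => ((1/2 - Real.cos x/4 - x/2 * Real.sin x : ℝ) : ℂ)
noncomputable def cf (n : ℤ) : ℂ := if n = 0 ∨ n = 1 ∨ n = -1 then 0 else (-1)^n * π / (n^2 - 1)

lemma exp_int_pi (m : ℤ) : Complex.exp (m * π * I) = (-1)^m := by
  rw [mul_assoc, Complex.exp_int_mul, Complex.exp_pi_mul_I]

lemma neg_one_zpow_neg (m : ℤ) : ((-1 : ℂ))^(-m) = (-1)^m := by
  rw [zpow_neg, ← inv_zpow, inv_neg, inv_one]

lemma exp_neg_int_pi (m : ℤ) : Complex.exp (-(m * π * I)) = (-1)^m := by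
  have : -((m:ℂ) * π * I) = (-m : ℤ) * π * I := by push_cast; ring
  rw [this, exp_int_pi, neg_one_zpow_neg]

lemma Ei_eq (m : ℤ) : Ei m = if m = 0 then (2*π:ℂ) else 0 := by
  rcases eq_or_ne m 0 with h | h
  · simp only [Ei, h, Int.cast_zero, zero_mul, Complex.exp_zero, if_pos rfl]
    simp [intervalIntegral.integral_const]
    push_cast; ring
  · have hc : (m:ℂ) * I ≠ 0 := by
      simp [Complex.ext_iff, I_ne_zero]
      exact_mod_cast h
    have : Ei m = ∫ x in (-π:ℝ)..π, Complex.exp ((m * I) * x) := by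
      unfold Ei; congr 1; ext x; ring_nf
    rw [this, integral_exp_mul_complex hc, if_neg h]
    have h1 : (m:ℂ) * I * π = m * π * I := by ring
    have h2 : (m:ℂ) * I * (-π:ℝ) = -(m * π * I) := by push_cast; ring
    rw [h1, h2, exp_int_pi, exp_neg_int_pi, sub_self, zero_div]

lemma Ki_hasDeriv (m : ℤ) (hm : m ≠ 0) (x : ℝ) :
    HasDerivAt (fun y : ℝ => Complex.exp (m * I * y) * (m * I * y - 1) / (m*I)^2)
      ((x:ℂ) * Complex.exp (m * I * x)) x := by
  have hc : (m:ℂ) * I ≠ 0 := by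
    simp [Complex.ext_iff, I_ne_zero]; exact_mod_cast hm
  have h1 : HasDerivAt (fun z : ℂ => Complex.exp (m * I * z) * (m * I * z - 1) / (m*I)^2)
      ((x:ℂ) * Complex.exp (m * I * x)) (x:ℝ) := by
    have hz : HasDerivAt (fun z : ℂ => (m:ℂ) * I * z) ((m:ℂ)*I) (x:ℂ) := by
      simpa using ((hasDerivAt_id ((x:ℝ):ℂ)).const_mul ((m:ℂ)*I))
    have he : HasDerivAt (fun z : ℂ => Complex.exp (m * I * z))
        (Complex.exp (m*I*x) * (m*I)) (x:ℂ) := by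
      have := (Complex.hasDerivAt_exp ((m:ℂ)*I*x)).comp (x:ℂ) hz
      exact this
    have := ((he.mul (hz.sub_const 1)).div_const ((m*I)^2))
    refine this.congr_deriv ?_
    rw [div_eq_iff (pow_ne_zero 2 hc)]
    ring
  exact h1.comp_ofReal

lemma Ki_eq (m : ℤ) (hm : m ≠ 0) : Ki m = -2*π*I*(-1)^m/m := by
  have key : Ki m = ∫ x in (-π:ℝ)..π, (x:ℂ) * Complex.exp (m * I * x) := by
    unfold Ki; congr 1; ext x; ring_nf
  rw [key, intervalIntegral.integral_eq_sub_of_hasDerivAt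
      (fun x _ => Ki_hasDeriv m hm x)
      (by apply Continuous.intervalIntegrable; continuity)]
  have hc : (m:ℂ) ≠ 0 := by exact_mod_cast hm
  have h1 : (m:ℂ) * I * (π:ℝ) = m * π * I := by ring
  have h2 : (m:ℂ) * I * ((-π:ℝ):ℝ) = -(m * π * I) := by push_cast; ring
  rw [h1, h2, exp_int_pi, exp_neg_int_pi]
  have hsq : ((m:ℂ)*I)^2 = -(m^2) := by
    rw [mul_pow, I_sq]; ring
  rw [hsq]
  push_cast
  field_simp
  ring

lemma contE (m : ℤ) : Continuous fun x : ℝ => Complex.exp (m * x * I) := by continuity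
lemma contK (m : ℤ) : Continuous fun x : ℝ => (x:ℂ) * Complex.exp (m * x * I) := by continuity

lemma integrand_decomp (n : ℤ) (x : ℝ) :
    Complex.exp (-n * x * I) * f₀ x
    = (1/2) * Complex.exp ((-n : ℤ) * x * I) - (1/8) * Complex.exp ((1-n : ℤ) * x * I)
      - (1/8) * Complex.exp ((-1-n : ℤ) * x * I)
      + (I/4) * ((x:ℂ) * Complex.exp ((1-n : ℤ) * x * I))
      - (I/4) * ((x:ℂ) * Complex.exp ((-1-n : ℤ) * x * I)) := by
  unfold f₀
  push_cast [Complex.ofReal_cos, Complex.ofReal_sin]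
  rw [Complex.cos, Complex.sin]
  have r1 : ((1:ℂ)-↑n)*↑x*I = ↑x*I + (-↑n*↑x*I) := by ring
  have r2 : ((-1:ℂ)-↑n)*↑x*I = -↑x*I + (-↑n*↑x*I) := by ring
  rw [r1, r2, Complex.exp_add, Complex.exp_add]
  ring

set_option maxHeartbeats 1000000 in
lemma coeff_integral (n : ℤ) :
    (∫ x in (-π:ℝ)..π, Complex.exp (-n * x * I) * f₀ x)
    = (1/2) * Ei (-n) - (1/8) * Ei (1-n) - (1/8) * Ei (-1-n)
      + (I/4) * Ki (1-n) - (I/4) * Ki (-1-n) := by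
  have hint : ∀ x ∈ Set.uIcc (-π:ℝ) π, Complex.exp (-n * x * I) * f₀ x
      = (1/2) * Complex.exp ((-n : ℤ) * x * I) - (1/8) * Complex.exp ((1-n : ℤ) * x * I)
      - (1/8) * Complex.exp ((-1-n : ℤ) * x * I)
      + (I/4) * ((x:ℂ) * Complex.exp ((1-n : ℤ) * x * I))
      - (I/4) * ((x:ℂ) * Complex.exp ((-1-n : ℤ) * x * I)) := fun x _ => integrand_decomp n x
  have i1 : IntervalIntegrable (fun x : ℝ => Complex.exp ((-n : ℤ) * x * I)) MeasureTheory.volume (-π) π := (contE (-n)).intervalIntegrable (-π) π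
  have i2 : IntervalIntegrable (fun x : ℝ => Complex.exp ((1-n : ℤ) * x * I)) MeasureTheory.volume (-π) π := (contE (1-n)).intervalIntegrable (-π) π
  have i3 : IntervalIntegrable (fun x : ℝ => Complex.exp ((-1-n : ℤ) * x * I)) MeasureTheory.volume (-π) π := (contE (-1-n)).intervalIntegrable (-π) π
  have i4 : IntervalIntegrable (fun x : ℝ => (x:ℂ) * Complex.exp ((1-n : ℤ) * x * I)) MeasureTheory.volume (-π) π := (contK (1-n)).intervalIntegrable (-π) π
  have i5 : IntervalIntegrable (fun x : ℝ => (x:ℂ) * Complex.exp ((-1-n : ℤ) * x * I)) MeasureTheory.volume (-π) π := (contK (-1-n)).intervalIntegrable (-π) π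
  rw [intervalIntegral.integral_congr hint]
  rw [intervalIntegral.integral_sub (((((i1.const_mul _).sub (i2.const_mul _)).sub (i3.const_mul _)).add (i4.const_mul _))) (i5.const_mul _)]
  rw [intervalIntegral.integral_add ((((i1.const_mul _).sub (i2.const_mul _)).sub (i3.const_mul _))) (i4.const_mul _)]
  rw [intervalIntegral.integral_sub (((i1.const_mul _).sub (i2.const_mul _))) (i3.const_mul _)]
  rw [intervalIntegral.integral_sub (i1.const_mul _) (i2.const_mul _)]
  rw [intervalIntegral.integral_const_mul, intervalIntegral.integral_const_mul,
      intervalIntegral.integral_const_mul, intervalIntegral.integral_const_mul,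
      intervalIntegral.integral_const_mul]
  rfl

lemma Ki_zero : Ki 0 = 0 := by
  unfold Ki
  simp only [Int.cast_zero, zero_mul, Complex.exp_zero, mul_one]
  rw [show (fun x : ℝ => (x:ℂ)) = (fun x : ℝ => ((x : ℝ) : ℂ)) from rfl]
  rw [intervalIntegral.integral_ofReal, integral_id]
  norm_num


lemma combo_eq (n : ℤ) :
    (1/2) * Ei (-n) - (1/8) * Ei (1-n) - (1/8) * Ei (-1-n)
      + (I/4) * Ki (1-n) - (I/4) * Ki (-1-n) = cf n := by
  rcases eq_or_ne n 0 with rfl | h0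
  · rw [show (1:ℤ)-0 = 1 by norm_num, show (-1:ℤ)-0 = -1 by norm_num, neg_zero]
    rw [Ei_eq, Ei_eq, Ei_eq, Ki_eq 1 (by norm_num), Ki_eq (-1) (by norm_num)]
    norm_num [cf, neg_one_zpow_neg]
    push_cast; ring_nf; simp [Complex.I_sq]
  rcases eq_or_ne n 1 with rfl | h1
  · rw [show (1:ℤ)-1 = 0 by norm_num, show (-1:ℤ)-1 = -2 by norm_num]
    rw [Ei_eq, Ei_eq, Ei_eq, Ki_zero, Ki_eq (-2) (by norm_num)]
    norm_num [cf, neg_one_zpow_neg]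
    push_cast; ring_nf; simp [Complex.I_sq]
  rcases eq_or_ne n (-1) with rfl | h2
  · rw [show (1:ℤ)-(-1) = 2 by norm_num, show (-1:ℤ)-(-1) = 0 by norm_num, neg_neg]
    rw [Ei_eq, Ei_eq, Ei_eq, Ki_zero, Ki_eq 2 (by norm_num)]
    norm_num [cf, neg_one_zpow_neg]
    push_cast; ring_nf; simp [Complex.I_sq]
  · have hA : (1:ℤ) - n ≠ 0 := by omega
    have hB : (-1:ℤ) - n ≠ 0 := by omega
    rw [Ei_eq, Ei_eq, Ei_eq, Ki_eq _ hA, Ki_eq _ hB,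
        if_neg (by omega), if_neg (by omega), if_neg (by omega)]
    rw [cf, if_neg (by tauto)]
    have e1 : ((-1:ℂ))^(1-n) = -((-1:ℂ))^n := by
      rw [sub_eq_add_neg, zpow_add₀ (by norm_num : (-1:ℂ) ≠ 0), zpow_one, neg_one_zpow_neg]
      ring
    have e2 : ((-1:ℂ))^(-1-n) = -((-1:ℂ))^n := by
      rw [show (-1:ℤ)-n = -(1+n) by ring, neg_one_zpow_neg,
          zpow_add₀ (by norm_num : (-1:ℂ) ≠ 0), zpow_one]
      ring
    rw [e1, e2]
    have c1 : ((1:ℤ)-n : ℂ) ≠ 0 := by exact_mod_cast (Int.cast_ne_zero (α := ℂ)).mpr hA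
    have c2 : ((-1:ℤ)-n : ℂ) ≠ 0 := by exact_mod_cast (Int.cast_ne_zero (α := ℂ)).mpr hB
    have c3 : ((n:ℂ)^2 - 1) ≠ 0 := by
      have h : ((n:ℂ)^2 - 1) = (((1:ℤ)-n : ℤ) : ℂ) * (((-1:ℤ)-n : ℤ) : ℂ) := by push_cast; ring
      rw [h]
      exact mul_ne_zero ((Int.cast_ne_zero (α := ℂ)).mpr hA) ((Int.cast_ne_zero (α := ℂ)).mpr hB)
    push_cast at c1 c2 ⊢
    field_simp
    ring_nf; simp [Complex.I_sq]; ring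


lemma coeff_value (n : ℤ) :
    (∫ x in (-π:ℝ)..π, Complex.exp (-n * x * I) * f₀ x) = cf n := by
  rw [coeff_integral, combo_eq]

lemma f₀_cont : Continuous f₀ :=
  Complex.continuous_ofReal.comp (by fun_prop)

lemma f₀_periodic_end : f₀ (-π) = f₀ (-π + 2*π) := by
  have h : -π + 2*π = π := by ring
  rw [h]
  unfold f₀
  norm_num [Real.cos_pi, Real.sin_pi, Real.cos_neg, Real.sin_neg]

-- summability of cf
lemma cf_norm (n : ℤ) (hn : 2 ≤ |n|) : ‖cf n‖ = π / ((n:ℝ)^2 - 1) := by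
  have h : ¬(n = 0 ∨ n = 1 ∨ n = -1) := by rw [Int.abs_eq_natAbs] at hn; omega
  rw [cf, if_neg h]
  have h2 : (2:ℝ) ≤ |(n:ℝ)| := by
    rw [← Int.cast_abs]; exact_mod_cast hn
  have hpos : (0:ℝ) < (n:ℝ)^2 - 1 := by nlinarith [_root_.sq_abs (n:ℝ)]
  rw [norm_div, norm_mul, norm_zpow]
  simp only [norm_neg, norm_one, one_zpow, one_mul]
  rw [Complex.norm_real, Real.norm_of_nonneg Real.pi_pos.le]
  congr 1
  have : ((n:ℂ)^2 - 1) = (((n:ℝ)^2 - 1 : ℝ) : ℂ) := by push_cast; ring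
  rw [this, Complex.norm_real, Real.norm_of_nonneg hpos.le]

lemma cf_summable : Summable cf := by
  apply Summable.of_norm_bounded_eventually (g := fun n : ℤ => 2*π * (1 / (n:ℝ)^2))
  · exact (Real.summable_one_div_int_pow.mpr one_lt_two).mul_left _
  · have hsub : {n : ℤ | ¬ ‖cf n‖ ≤ 2*π * (1/(n:ℝ)^2)} ⊆ {-1, 0, 1} := by
      intro n hn
      by_contra hmem
      simp only [Set.mem_insert_iff, Set.mem_singleton_iff] at hmem
      push_neg at hmem
      have habs : 2 ≤ |n| := by rw [Int.abs_eq_natAbs]; omega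
      apply hn
      rw [cf_norm n habs]
      have h2 : (2:ℝ) ≤ |(n:ℝ)| := by rw [← Int.cast_abs]; exact_mod_cast habs
      have h1 : (0:ℝ) < (n:ℝ)^2 - 1 := by nlinarith [_root_.sq_abs (n:ℝ)]
      have h0 : (0:ℝ) < (n:ℝ)^2 := by nlinarith
      have key : π / ((n:ℝ)^2 - 1) ≤ 2*π/((n:ℝ)^2) := by
        rw [div_le_div_iff₀ h1 h0]
        have h4 : (4:ℝ) ≤ (n:ℝ)^2 := by nlinarith [_root_.sq_abs (n:ℝ), abs_nonneg (n:ℝ)]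
        nlinarith [Real.pi_pos]
      calc π/((n:ℝ)^2-1) ≤ 2*π/(n:ℝ)^2 := key
        _ = 2*π*(1/(n:ℝ)^2) := by ring
    exact Set.Finite.subset (Set.toFinite ({-1, 0, 1} : Set ℤ)) hsub

noncomputable instance fact2pi : Fact (0 < 2*π) := ⟨by positivity⟩

noncomputable def Fc : C(AddCircle (2*π), ℂ) :=
  ⟨AddCircle.liftIco (2*π) (-π) f₀,
    AddCircle.liftIco_continuous f₀_periodic_end (f₀_cont.continuousOn)⟩

lemma fourierCoeff_Fc (n : ℤ) : fourierCoeff (⇑Fc) n = cf n / (2*π) := by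
  show fourierCoeff (AddCircle.liftIco (2*π) (-π) f₀) n = cf n / (2*π)
  rw [fourierCoeff_liftIco_eq, fourierCoeffOn_eq_integral]
  have hcongr : ∀ x ∈ Set.uIcc (-π:ℝ) (-π + 2*π),
      (fourier (-n) (x : AddCircle (-π + 2*π - -π)) : ℂ) • f₀ x
        = Complex.exp (-n * x * I) * f₀ x := by
    intro x _
    rw [fourier_coe_apply, smul_eq_mul]
    congr 1
    have hπ : (π:ℂ) ≠ 0 := Complex.ofReal_ne_zero.mpr Real.pi_ne_zero
    congr 1
    push_cast
    field_simp
    ring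
  rw [intervalIntegral.integral_congr hcongr]
  have hend : -π + 2*π = π := by ring
  rw [hend, coeff_value n]
  rw [Complex.real_smul]
  have h : (1/(π - -π) : ℝ) = 1/(2*π) := by ring_nf
  rw [h]
  push_cast
  ring

theorem stmt_6 (θ : ℝ) (hθ : θ ∈ Set.Ioo (-π) π) :
    HasSum (fun n : ℕ => (-1 : ℝ) ^ (n + 2) * Real.cos (((n : ℝ) + 2) * θ) / (((n : ℝ) + 2) ^ 2 - 1))
      (1 / 2 - (1 / 4) * Real.cos θ - (θ / 2) * Real.sin θ) := by
  obtain ⟨hθ1, hθ2⟩ := hθ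
  have hsum : Summable (fourierCoeff (⇑Fc)) := by
    apply Summable.congr (cf_summable.div_const (2*π))
    intro n
    rw [fourierCoeff_Fc]
  have hZ := has_pointwise_sum_fourier_series_of_summable hsum (θ : AddCircle (2*π))
  -- rewrite the value
  have hFθ : Fc (θ : AddCircle (2*π)) = f₀ θ := by
    show AddCircle.liftIco (2*π) (-π) f₀ (θ : AddCircle (2*π)) = f₀ θ
    apply AddCircle.liftIco_coe_apply
    constructor
    · exact hθ1.le
    · linarith
  -- rewrite summand
  set g : ℤ → ℂ := fun i => cf i / (2*π) * Complex.exp (i * θ * I) with hg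
  have hfun : (fun i : ℤ => fourierCoeff (⇑Fc) i • (fourier i) (θ : AddCircle (2*π))) = g := by
    funext i
    rw [fourierCoeff_Fc, fourier_coe_apply, smul_eq_mul, hg]
    congr 2
    have hπ : (π:ℂ) ≠ 0 := Complex.ofReal_ne_zero.mpr Real.pi_ne_zero
    push_cast
    field_simp
  rw [hfun, hFθ] at hZ
  have hN := hZ.nat_add_neg
  have hg0 : g 0 = 0 := by simp [hg, cf]
  rw [hg0, add_zero] at hN
  have hS : ∑ i ∈ Finset.range 2, (g (i:ℤ) + g (-(i:ℤ))) = 0 := by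
    rw [Finset.sum_range_succ, Finset.sum_range_one]
    have h0 : cf 0 = 0 := by simp [cf]
    have h1 : cf 1 = 0 := by simp [cf]
    have h2 : cf (-1) = 0 := by simp [cf]
    simp [hg, h0, h1, h2]
  have hT : HasSum (fun n : ℕ => g ((n:ℤ)+2) + g (-((n:ℤ)+2))) (f₀ θ) := by
    have := (hasSum_nat_add_iff (f := fun n : ℕ => g (n:ℤ) + g (-(n:ℤ))) 2 (g := f₀ θ)).mpr
      (by rwa [hS, add_zero])
    convert this using 2
    · rfl
    · push_cast; rfl
  -- convert to real series
  have hterm : ∀ n : ℕ, g ((n:ℤ)+2) + g (-((n:ℤ)+2))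
      = (((-1 : ℝ) ^ (n + 2) * Real.cos (((n : ℝ) + 2) * θ) / (((n : ℝ) + 2) ^ 2 - 1) : ℝ) : ℂ) := by
    intro n
    have hcond : ¬((n:ℤ)+2 = 0 ∨ (n:ℤ)+2 = 1 ∨ (n:ℤ)+2 = -1) := by omega
    have hcond' : ¬(-((n:ℤ)+2) = 0 ∨ -((n:ℤ)+2) = 1 ∨ -((n:ℤ)+2) = -1) := by omega
    rw [hg]
    simp only [cf, if_neg hcond, if_neg hcond']
    have hzp : ((-1 : ℂ)) ^ (-((n:ℤ)+2)) = ((-1 : ℂ)) ^ ((n:ℤ)+2) := by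
      rw [zpow_neg, ← inv_zpow, inv_neg, inv_one]
    have hzn : ((-1 : ℂ)) ^ ((n:ℤ)+2) = ((-1 : ℂ)) ^ (n+2 : ℕ) := by
      rw [show ((n:ℤ)+2) = ((n+2 : ℕ) : ℤ) by push_cast; ring, zpow_natCast]
    have hcos : Complex.exp (((n:ℤ)+2 : ℂ) * θ * I) + Complex.exp ((-((n:ℤ)+2) : ℂ) * θ * I)
        = 2 * Complex.cos ((((n:ℝ)+2) * θ : ℝ) : ℂ) := by
      rw [Complex.cos]
      push_cast
      congr 2 <;> ring
    have hreal : (0:ℝ) < ((n:ℝ)+2)^2 - 1 := by nlinarith [Nat.cast_nonneg (α := ℝ) n]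
    have hden : ((n:ℂ)+2)^2 - 1 ≠ 0 := by
      have hh : ((n:ℂ)+2)^2 - 1 = ((((n:ℝ)+2)^2 - 1 : ℝ) : ℂ) := by push_cast; ring
      rw [hh]
      exact Complex.ofReal_ne_zero.mpr hreal.ne'
    have hπ : (π:ℂ) ≠ 0 := Complex.ofReal_ne_zero.mpr Real.pi_ne_zero
    rw [hzp, hzn]
    push_cast
    have hc2 : Complex.cos ((((n:ℝ)+2) * θ : ℝ) : ℂ)
        = (Complex.exp (((n:ℂ)+2) * θ * I) + Complex.exp (-((n:ℂ)+2) * θ * I))/2 := by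
      push_cast
      push_cast at hcos
      rw [eq_div_iff (two_ne_zero)]
      linear_combination -hcos
    push_cast at hc2
    rw [hc2]
    simp only [neg_sq]
    field_simp
  have hT' : HasSum (fun n : ℕ =>
      (((-1 : ℝ) ^ (n + 2) * Real.cos (((n : ℝ) + 2) * θ) / (((n : ℝ) + 2) ^ 2 - 1) : ℝ) : ℂ))
      ((1/2 - Real.cos θ/4 - θ/2 * Real.sin θ : ℝ) : ℂ) := by
    have hfe : (fun n : ℕ => g ((n:ℤ)+2) + g (-((n:ℤ)+2))) = (fun n : ℕ =>
      (((-1 : ℝ) ^ (n + 2) * Real.cos (((n : ℝ) + 2) * θ) / (((n : ℝ) + 2) ^ 2 - 1) : ℝ) : ℂ)) :=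
      funext hterm
    rw [hfe] at hT
    exact hT
  have hR := Complex.hasSum_ofReal.mp hT'
  convert hR using 1
  ring
end

section
/- Define ψ_{τ,δ}(θ) = (1-δ)^{2τ}/(1 + δ² - 2δ cos θ)^τ for δ ∈ (0,1), τ > 0, θ ∈ [0,π]. Then the descente operator satisfies D_S ψ_{τ,δ} = ψ_{τ+1,δ}, i.e., ψ'_{τ,δ}(θ)/(sin θ · ψ''_{τ,δ}(0)) = ψ_{τ+1,δ}(θ) for θ ∈ (0,π). -/
/-!
Writing `f θ = 1 + δ² - 2δ cos θ`, we have `ψ_σ = (1 - δ)^{2σ} f^{-σ}` and `f' = 2δ sin θ`, so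
`ψ_σ' = -2δσ (1 - δ)^{2σ} f^{-σ-1} sin θ`. Differentiating once more at `0`, where `sin` vanishes
and `f 0 = (1 - δ)²`, gives `ψ_σ''(0) = -2δσ / (1 - δ)²`; dividing, the factor `-2δσ sin θ`
cancels and what is left is `(1 - δ)^{2σ+2} f^{-σ-1} = ψ_{σ+1}`.
-/

open Real

noncomputable def sphereDescente (ψ : ℝ → ℝ) (θ : ℝ) : ℝ :=
  deriv ψ θ / (sin θ * deriv (deriv ψ) 0)

noncomputable def multiquadric (δ σ θ : ℝ) : ℝ :=
  (1 - δ) ^ (2 * σ) / (1 + δ ^ 2 - 2 * δ * cos θ) ^ σ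

lemma hasDerivAt_mul_sin_zero {g : ℝ → ℝ} (hg : DifferentiableAt ℝ g 0) :
    HasDerivAt (fun θ => g θ * sin θ) (g 0) 0 := by
  simpa using hg.hasDerivAt.fun_mul (hasDerivAt_sin 0)

namespace multiquadric

variable {δ : ℝ}

lemma one_sub_sq_le_base (hδ : 0 ≤ δ) (θ : ℝ) : (1 - δ) ^ 2 ≤ 1 + δ ^ 2 - 2 * δ * cos θ := by
  nlinarith [cos_le_one θ]

lemma base_pos (hδ : 0 ≤ δ) (hδ1 : δ ≠ 1) (θ : ℝ) : 0 < 1 + δ ^ 2 - 2 * δ * cos θ :=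
  (sq_pos_of_ne_zero (sub_ne_zero.mpr hδ1.symm)).trans_le (one_sub_sq_le_base hδ θ)

lemma hasDerivAt_base (δ θ : ℝ) :
    HasDerivAt (fun θ => 1 + δ ^ 2 - 2 * δ * cos θ) (2 * δ * sin θ) θ := by
  simpa using ((hasDerivAt_cos θ).const_mul (2 * δ)).const_sub (1 + δ ^ 2)

lemma eq_mul_rpow_neg (hδ : 0 ≤ δ) (σ θ : ℝ) :
    multiquadric δ σ θ = (1 - δ) ^ (2 * σ) * (1 + δ ^ 2 - 2 * δ * cos θ) ^ (-σ) := by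
  rw [multiquadric, rpow_neg ((sq_nonneg _).trans (one_sub_sq_le_base hδ θ)), div_eq_mul_inv]

lemma hasDerivAt (hδ : 0 ≤ δ) (hδ1 : δ ≠ 1) (σ θ : ℝ) :
    HasDerivAt (multiquadric δ σ) (-2 * δ * σ * (1 - δ) ^ (2 * σ) *
      ((1 + δ ^ 2 - 2 * δ * cos θ) ^ (-σ - 1) * sin θ)) θ := by
  have h := ((hasDerivAt_base δ θ).rpow_const (p := -σ) (Or.inl (base_pos hδ hδ1 θ).ne')).const_mul
    ((1 - δ) ^ (2 * σ))
  rw [funext (eq_mul_rpow_neg hδ σ)]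
  exact h.congr_deriv (by ring)

lemma deriv_deriv_zero (hδ : 0 ≤ δ) (hδ1 : δ < 1) (σ : ℝ) :
    deriv (deriv (multiquadric δ σ)) 0 = -2 * δ * σ / (1 - δ) ^ 2 := by
  have h1δ : 0 < 1 - δ := sub_pos.mpr hδ1
  have hdiff : DifferentiableAt ℝ (fun θ => (1 + δ ^ 2 - 2 * δ * cos θ) ^ (-σ - 1)) 0 :=
    (hasDerivAt_base δ 0).differentiableAt.rpow_const (Or.inl (base_pos hδ hδ1.ne 0).ne')
  rw [funext fun θ => (hasDerivAt hδ hδ1.ne σ θ).deriv,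
    ((hasDerivAt_mul_sin_zero hdiff).const_mul _).deriv, cos_zero]
  have hbase : 1 + δ ^ 2 - 2 * δ * 1 = ((1 - δ) ^ (2 : ℝ)) := by
    rw [rpow_two]; ring
  rw [hbase, ← rpow_mul h1δ.le, mul_assoc, ← rpow_add h1δ,
    show 2 * σ + 2 * (-σ - 1) = -(2 : ℝ) by ring, rpow_neg h1δ.le, rpow_two, div_eq_mul_inv]

lemma sphereDescente_eq (hδ0 : 0 < δ) (hδ1 : δ < 1) {σ θ : ℝ} (hσ : σ ≠ 0) (hθ : sin θ ≠ 0) :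
    sphereDescente (multiquadric δ σ) θ = multiquadric δ (σ + 1) θ := by
  have h1δ : 0 < 1 - δ := sub_pos.mpr hδ1
  have hf := base_pos hδ0.le hδ1.ne θ
  rw [sphereDescente, (hasDerivAt hδ0.le hδ1.ne σ θ).deriv, deriv_deriv_zero hδ0.le hδ1 σ,
    multiquadric, mul_add, mul_one, rpow_add h1δ, rpow_two, show -σ - 1 = -(σ + 1) by ring,
    rpow_neg hf.le]
  field_simp

end multiquadric

theorem stmt_9 (τ δ : ℝ) (hτ : 0 < τ) (hδ : δ ∈ Set.Ioo (0 : ℝ) 1)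
    (ψ : ℝ → ℝ → ℝ)
    (hψ : ∀ σ θ, ψ σ θ = (1 - δ) ^ (2 * σ) / (1 + δ ^ 2 - 2 * δ * Real.cos θ) ^ σ) :
    ∀ θ ∈ Set.Ioo (0 : ℝ) π,
      deriv (ψ τ) θ / (Real.sin θ * deriv (deriv (ψ τ)) 0) = ψ (τ + 1) θ := by
  obtain rfl : ψ = multiquadric δ := funext₂ hψ
  intro θ hθ
  exact multiquadric.sphereDescente_eq hδ.1 hδ.2 hτ.ne' (sin_pos_of_pos_of_lt_pi hθ.1 hθ.2).ne'
end

section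
/- Let (b_n)_{n≥0} be nonnegative reals with ∑ b_n = 1, let ψ(θ) = ∑ b_n (cos θ)^n on [0,π], and suppose ∑_{n=0}^∞ (-1)^n b_n/(n+1) ≥ 0. Then the montée I_S ψ(θ) = ∫_θ^π sin β ψ(β) dβ / ∫_0^π sin β ψ(β) dβ admits the representation I_S ψ(θ) = ∑_{n=0}^∞ a_n (cos θ)^n with a_n ≥ 0, ∑ a_n = 1, where a_n = b_{n-1}/(n·G) for n ≥ 1 and a_0 = (1/G)·∑_{n=0}^∞ (-1)^n b_n/(n+1), with G = 2·∑_{n=0}^∞ b_{2n}/(2n+1). -/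
/-! Substituting `x = cos β` gives `∫_θ^π sin β cos^n β dβ = (cos^{n+1} θ + (-1)^n)/(n+1)`, and
`ψ` may be integrated term by term (dominated by `∑ |b n|`), so
`∫_θ^π sin β ψ(β) dβ = C + ∑ b_n cos^{n+1} θ/(n+1)` with `C = ∑ (-1)^n b_n/(n+1)`.
At `θ = 0` the odd terms cancel and the integral is `G`; as `C ≥ 0` and `∑ b_n/(n+1) > 0`,
`G > 0`, and dividing by `G` gives the series `∑ a_n cos^n θ`. -/

open Real

lemma integral_sin_mul_cos_pow (n : ℕ) (θ : ℝ) :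
    ∫ β in θ..π, sin β * cos β ^ n = (cos θ ^ (n + 1) + (-1) ^ n) / (n + 1) := by
  have hderiv : ∀ x ∈ Set.uIcc θ π,
      HasDerivAt (fun y => -cos y ^ (n + 1) / (n + 1)) (sin x * cos x ^ n) x := by
    intro x _
    refine (((hasDerivAt_cos x).pow (n + 1)).neg.div_const ((n : ℝ) + 1)).congr_deriv ?_
    push_cast
    field_simp
  rw [intervalIntegral.integral_eq_sub_of_hasDerivAt hderiv
    ((continuous_sin.mul (continuous_cos.pow n)).intervalIntegrable _ _), cos_pi]
  ring

lemma summable_mul_of_abs_le_one {ι : Type*} {b c : ι → ℝ} (hb : Summable b)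
    (hc : ∀ i, |c i| ≤ 1) : Summable fun i => b i * c i :=
  (summable_abs_iff.mpr hb).of_norm_bounded fun i => by
    rw [Real.norm_eq_abs, abs_mul]
    exact mul_le_of_le_one_right (abs_nonneg _) (hc i)

lemma summable_neg_one_pow_mul_div_nat_add_one {b : ℕ → ℝ} (hb : Summable b) :
    Summable fun n : ℕ => (-1) ^ n * b n / ((n : ℝ) + 1) := by
  refine (summable_mul_of_abs_le_one hb (c := fun n : ℕ => (-1) ^ n / ((n : ℝ) + 1))
    fun n => ?_).congr fun n => by ring
  rw [abs_div, abs_pow, abs_neg, abs_one, one_pow, abs_of_pos (by positivity)]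
  exact div_le_one_of_le₀ (by linarith [n.cast_nonneg (α := ℝ)]) (by positivity)

lemma hasSum_integral_sin_mul_tsum_cos_pow {b : ℕ → ℝ} (hb : Summable b) (θ : ℝ) :
    HasSum (fun n => b n * ((cos θ ^ (n + 1) + (-1) ^ n) / (n + 1)))
      (∫ β in θ..π, sin β * ∑' n, b n * cos β ^ n) := by
  simp_rw [← integral_sin_mul_cos_pow, ← intervalIntegral.integral_const_mul]
  have hterm : ∀ n β, |sin β * cos β ^ n| ≤ 1 := fun n β => by
    rw [abs_mul, abs_pow]
    exact mul_le_one₀ (abs_sin_le_one β) (by positivity)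
      (pow_le_one₀ (abs_nonneg _) (abs_cos_le_one β))
  refine intervalIntegral.hasSum_integral_of_dominated_convergence (fun n _ => |b n|)
    (fun n => (continuous_const.mul ((continuous_sin.mul
      (continuous_cos.pow n)))).aestronglyMeasurable)
    (fun n => .of_forall fun β _ => ?_) (.of_forall fun _ _ => summable_abs_iff.mpr hb)
    intervalIntegrable_const (.of_forall fun β _ => ?_)
  · rw [Real.norm_eq_abs, abs_mul]
    exact mul_le_of_le_one_right (abs_nonneg _) (hterm n β)
  · have hcos : ∀ n, |cos β ^ n| ≤ 1 := fun n => by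
      rw [abs_pow]; exact pow_le_one₀ (abs_nonneg _) (abs_cos_le_one β)
    refine ((summable_mul_of_abs_le_one hb hcos).hasSum.mul_left (sin β)).congr_fun fun n => ?_
    ring

lemma hasSum_mul_one_add_neg_one_pow_div {b : ℕ → ℝ} (hb : Summable b) :
    HasSum (fun n => b n * ((1 + (-1) ^ n) / (n + 1)))
      (2 * ∑' k : ℕ, b (2 * k) / (2 * (k : ℝ) + 1)) := by
  have hinv : ∀ k : ℕ, |1 / (2 * (k : ℝ) + 1)| ≤ 1 := fun k => by
    rw [abs_of_pos (by positivity)]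
    exact div_le_one_of_le₀ (by linarith [k.cast_nonneg (α := ℝ)]) (by positivity)
  have heven : Summable fun k : ℕ => b (2 * k) / (2 * (k : ℝ) + 1) := by
    simpa only [mul_one_div, Function.comp_apply] using
      summable_mul_of_abs_le_one (hb.comp_injective (mul_right_injective₀ two_ne_zero)) hinv
  set f : ℕ → ℝ := fun n => b n * ((1 + (-1) ^ n) / (n + 1))
  have he : HasSum (fun k => f (2 * k)) (2 * ∑' k : ℕ, b (2 * k) / (2 * (k : ℝ) + 1)) := by
    refine (heven.hasSum.mul_left 2).congr_fun fun k => ?_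
    simp only [f, (even_two_mul k).neg_one_pow]
    push_cast
    ring
  have ho : HasSum (fun k => f (2 * k + 1)) 0 := by
    refine hasSum_zero.congr_fun fun k => ?_
    simp only [f, (odd_two_mul_add_one k).neg_one_pow, add_neg_cancel, zero_div, mul_zero]
  simpa only [add_zero] using he.even_add_odd ho

lemma pos_of_hasSum_mul_one_div {b : ℕ → ℝ} (hb : ∀ n, 0 ≤ b n) (hb0 : b ≠ 0) {s : ℝ}
    (hs : HasSum (fun n => b n * (1 / (n + 1))) s) : 0 < s := by
  obtain ⟨m, hm⟩ := Function.ne_iff.mp hb0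
  exact hasSum_lt (fun n => mul_nonneg (hb n) (by positivity))
    (mul_pos ((hb m).lt_of_ne' hm) (by positivity)) hasSum_zero hs

lemma hasSum_mul_pow_of_hasSum_antideriv {a b : ℕ → ℝ} {C G x s : ℝ} (hG : G ≠ 0)
    (ha0 : a 0 = C / G) (han : ∀ n : ℕ, 1 ≤ n → a n = b (n - 1) / (n * G))
    (hs : HasSum (fun n => b n * (x ^ (n + 1) / (n + 1))) s) :
    HasSum (fun n => a n * x ^ n) ((C + s) / G) := by
  rw [← hasSum_nat_add_iff' 1]
  simp only [Finset.range_one, Finset.sum_singleton, pow_zero, mul_one, ha0, ← sub_div,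
    add_sub_cancel_left]
  refine (hs.div_const G).congr_fun fun n => ?_
  rw [han (n + 1) (Nat.le_add_left 1 n), Nat.add_sub_cancel]
  push_cast
  field_simp

theorem stmt_12 (b : ℕ → ℝ) (hb : ∀ n, 0 ≤ b n) (hsum : HasSum b 1)
    (ψ : ℝ → ℝ) (hψ : ∀ θ, ψ θ = ∑' n : ℕ, b n * (Real.cos θ) ^ n)
    (hc : 0 ≤ ∑' n : ℕ, (-1 : ℝ) ^ n * b n / ((n : ℝ) + 1))
    (G : ℝ) (hG : G = 2 * ∑' n : ℕ, b (2 * n) / (2 * (n : ℝ) + 1))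
    (a : ℕ → ℝ)
    (ha0 : a 0 = (∑' n : ℕ, (-1 : ℝ) ^ n * b n / ((n : ℝ) + 1)) / G)
    (han : ∀ n : ℕ, 1 ≤ n → a n = b (n - 1) / ((n : ℝ) * G)) :
    (∀ n, 0 ≤ a n) ∧ HasSum a 1 ∧
      ∀ θ ∈ Set.Icc (0 : ℝ) π,
        (∫ β in θ..π, Real.sin β * ψ β) / (∫ β in (0 : ℝ)..π, Real.sin β * ψ β) =
          ∑' n : ℕ, a n * (Real.cos θ) ^ n := by
  obtain rfl : ψ = fun θ => ∑' n, b n * cos θ ^ n := funext hψ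
  set C := ∑' n : ℕ, (-1 : ℝ) ^ n * b n / ((n : ℝ) + 1)
  set I : ℝ → ℝ := fun θ => ∫ β in θ..π, sin β * ∑' n, b n * cos β ^ n
  have hC : HasSum (fun n : ℕ => (-1 : ℝ) ^ n * b n / ((n : ℝ) + 1)) C :=
    (summable_neg_one_pow_mul_div_nat_add_one hsum.summable).hasSum
  have hantideriv : ∀ θ, HasSum (fun n => b n * (cos θ ^ (n + 1) / (n + 1))) (I θ - C) :=
    fun θ => ((hasSum_integral_sin_mul_tsum_cos_pow hsum.summable θ).sub hC).congr_fun
      fun n => by ring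
  have hI0 : I 0 = G := by
    have h := hasSum_integral_sin_mul_tsum_cos_pow hsum.summable 0
    simp only [cos_zero, one_pow] at h
    exact hG ▸ h.unique (hasSum_mul_one_add_neg_one_pow_div hsum.summable)
  have hGpos : 0 < G := by
    have h := hantideriv 0
    simp only [cos_zero, one_pow] at h
    have hb0 : b ≠ 0 := by
      rintro rfl
      exact one_ne_zero (hsum.unique hasSum_zero)
    linarith [pos_of_hasSum_mul_one_div hb hb0 h]
  have hseries θ : HasSum (fun n => a n * cos θ ^ n) (I θ / G) := by
    simpa using hasSum_mul_pow_of_hasSum_antideriv hGpos.ne' ha0 han (hantideriv θ)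
  refine ⟨fun n => ?_, ?_, fun θ _ => ?_⟩
  · rcases n with _ | n
    · exact ha0 ▸ div_nonneg hc hGpos.le
    · rw [han (n + 1) (Nat.le_add_left 1 n)]
      exact div_nonneg (hb _) (by positivity)
  · simpa [hI0, hGpos.ne'] using hseries 0
  · change I θ / I 0 = _
    rw [hI0, (hseries θ).tsum_eq]
end

section
/- Let (b_n)_{n≥0} be nonnegative reals with ∑ b_n = 1, b_n > 0 for some n ≥ 1, G = ∑_{n=0}^∞ b_{n+1}(n+1) < ∞, and ψ(θ) = ∑ b_n (cos θ)^n on [0,π]. Then on (0,π), ψ'(θ)/(sin θ · ψ''(0)) = ∑_{n=0}^∞ c_n (cos θ)^n with c_n = b_{n+1}(n+1)/G, so c_n ≥ 0 and ∑ c_n = 1. -/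
open Real Filter Topology

/-! Term-by-term differentiation of `ψ θ = ∑ bₙ cosⁿ θ` gives `ψ' θ = -sin θ · h θ` with
`h θ = ∑ (n+1) bₙ₊₁ cosⁿ θ`. As `sin 0 = 0` and `h` is continuous, differentiating this product at
`0` only needs the derivative of `sin`, giving `ψ''(0) = -h 0 = -G`, so
`ψ' θ / (sin θ · ψ''(0)) = h θ / G`. -/

theorem hasDerivAt_mul_of_eq_zero_of_continuousAt {𝕜 : Type*} [NontriviallyNormedField 𝕜]
    {f g : 𝕜 → 𝕜} {f' x : 𝕜} (hf : HasDerivAt f f' x) (hfx : f x = 0)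
    (hg : ContinuousAt g x) : HasDerivAt (fun y => f y * g y) (f' * g x) x := by
  rw [hasDerivAt_iff_tendsto_slope] at hf ⊢
  have hslope : slope (fun y => f y * g y) x = fun y => slope f x y * g y := by
    funext y
    simp only [slope_def_field, hfx, zero_mul, sub_zero]
    ring
  rw [hslope]
  exact hf.mul (hg.tendsto.mono_left nhdsWithin_le_nhds)

theorem summable_of_summable_norm_mul_natCast {a : ℕ → ℝ}
    (ha : Summable fun n : ℕ => ‖a n‖ * n) : Summable a := by
  refine Summable.of_norm_bounded_eventually_nat ha ?_
  filter_upwards [eventually_ge_atTop 1] with n hn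
  exact le_mul_of_one_le_right (norm_nonneg _) (by exact_mod_cast hn)

noncomputable def cosSeries (a : ℕ → ℝ) (θ : ℝ) : ℝ := ∑' n, a n * cos θ ^ n

namespace cosSeries

variable {a : ℕ → ℝ}

theorem continuous (ha : Summable fun n => ‖a n‖) : Continuous (cosSeries a) := by
  refine continuous_tsum (fun n => by fun_prop) ha fun n θ => ?_
  rw [norm_mul, norm_pow]
  exact mul_le_of_le_one_right (norm_nonneg _) (pow_le_one₀ (norm_nonneg _) (abs_cos_le_one θ))

theorem hasDerivAt (ha : Summable fun n : ℕ => ‖a n‖ * n) (θ : ℝ) :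
    HasDerivAt (cosSeries a) (-sin θ * cosSeries (fun n => a (n + 1) * (n + 1)) θ) θ := by
  have hterm : ∀ n y, HasDerivAt (fun z => a n * cos z ^ n)
      (a n * (n * cos y ^ (n - 1) * -sin y)) y := fun n y =>
    ((hasDerivAt_pow n (cos y)).comp y (hasDerivAt_cos y)).const_mul (a n)
  have hbound : ∀ n y, ‖a n * (n * cos y ^ (n - 1) * -sin y)‖ ≤ ‖a n‖ * n := fun n y => by
    rw [norm_mul, norm_mul, norm_mul, norm_neg, norm_pow, Real.norm_natCast]
    calc _ = ‖a n‖ * n * (‖cos y‖ ^ (n - 1) * ‖sin y‖) := by ring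
      _ ≤ ‖a n‖ * n := mul_le_of_le_one_right (by positivity) <|
        mul_le_one₀ (pow_le_one₀ (norm_nonneg _) (abs_cos_le_one y)) (norm_nonneg _)
          (abs_sin_le_one y)
  have hsum0 : Summable fun n => a n * cos 0 ^ n := by
    simpa using summable_of_summable_norm_mul_natCast ha
  refine (hasDerivAt_tsum ha hterm hbound hsum0 θ).congr_deriv ?_
  have hsumθ : Summable fun n => a n * (n * cos θ ^ (n - 1) * -sin θ) :=
    Summable.of_norm_bounded ha (hbound · θ)
  rw [hsumθ.tsum_eq_zero_add]
  simp only [cosSeries, Nat.cast_zero, zero_mul, mul_zero, zero_add, Nat.add_sub_cancel,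
    Nat.cast_add, Nat.cast_one, ← tsum_mul_left]
  congr 1
  funext n
  ring

theorem hasDerivAt_deriv_zero (ha : Summable fun n : ℕ => ‖a n‖ * n) :
    HasDerivAt (deriv (cosSeries a)) (-∑' n : ℕ, a (n + 1) * (n + 1)) 0 := by
  have hderiv : deriv (cosSeries a) =
      fun θ => -sin θ * cosSeries (fun n => a (n + 1) * (n + 1)) θ :=
    funext fun θ => (hasDerivAt ha θ).deriv
  have hcont : Continuous (cosSeries fun n => a (n + 1) * (n + 1)) := by
    refine continuous ((summable_nat_add_iff 1).2 ha |>.congr fun n => ?_)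
    rw [norm_mul, Nat.cast_add, Nat.cast_one]
    congr 1
    exact (abs_of_nonneg (by positivity)).symm
  rw [hderiv]
  refine (hasDerivAt_mul_of_eq_zero_of_continuousAt (hasDerivAt_sin 0).fun_neg (by simp)
    hcont.continuousAt).congr_deriv ?_
  simp only [cosSeries, cos_zero, one_pow, mul_one, neg_one_mul]

end cosSeries

theorem stmt_13_general (b : ℕ → ℝ) (hb : ∀ n, 0 ≤ b n)
    (hpos : ∃ n : ℕ, 1 ≤ n ∧ 0 < b n)
    (hmom : Summable (fun n : ℕ => b (n + 1) * ((n : ℝ) + 1)))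
    (G : ℝ) (hG : G = ∑' n : ℕ, b (n + 1) * ((n : ℝ) + 1))
    (ψ : ℝ → ℝ) (hψ : ∀ θ, ψ θ = ∑' n : ℕ, b n * (Real.cos θ) ^ n)
    (c : ℕ → ℝ) (hc : ∀ n, c n = b (n + 1) * ((n : ℝ) + 1) / G) :
    (∀ θ ∈ Set.Ioo (0 : ℝ) π,
        deriv ψ θ / (Real.sin θ * deriv (deriv ψ) 0) = ∑' n : ℕ, c n * (Real.cos θ) ^ n) ∧
      (∀ n, 0 ≤ c n) ∧ HasSum c 1 := by
  have hψ_eq : ψ = cosSeries b := funext hψ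
  have hmom_norm : Summable fun n : ℕ => ‖b n‖ * n := by
    refine (summable_nat_add_iff 1).1 (hmom.congr fun n => ?_)
    rw [Real.norm_of_nonneg (hb _)]
    push_cast
    rfl
  have hG_pos : 0 < G := by
    obtain ⟨n, hn, hbn⟩ := hpos
    obtain ⟨k, rfl⟩ := Nat.exists_eq_add_of_le' hn
    exact hG ▸ hmom.tsum_pos (fun m => mul_nonneg (hb _) (by positivity)) k (by positivity)
  have hψ'' : deriv (deriv ψ) 0 = -G := by
    rw [hψ_eq, hG]
    exact (cosSeries.hasDerivAt_deriv_zero hmom_norm).deriv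
  refine ⟨fun θ hθ => ?_, fun n => ?_, ?_⟩
  · have hsin : sin θ ≠ 0 := (sin_pos_of_pos_of_lt_pi hθ.1 hθ.2).ne'
    rw [hψ'', hψ_eq, (cosSeries.hasDerivAt hmom_norm θ).deriv, cosSeries]
    simp only [hc, div_mul_eq_mul_div, tsum_div_const]
    field_simp
  · rw [hc]
    exact div_nonneg (mul_nonneg (hb _) (by positivity)) hG_pos.le
  · have h := (hG ▸ hmom.hasSum).div_const G
    rwa [div_self hG_pos.ne', ← funext hc] at h

theorem stmt_13 (b : ℕ → ℝ) (hb : ∀ n, 0 ≤ b n) (hsum : HasSum b 1)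
    (hpos : ∃ n : ℕ, 1 ≤ n ∧ 0 < b n)
    (hmom : Summable (fun n : ℕ => b (n + 1) * ((n : ℝ) + 1)))
    (G : ℝ) (hG : G = ∑' n : ℕ, b (n + 1) * ((n : ℝ) + 1))
    (ψ : ℝ → ℝ) (hψ : ∀ θ, ψ θ = ∑' n : ℕ, b n * (Real.cos θ) ^ n)
    (c : ℕ → ℝ) (hc : ∀ n, c n = b (n + 1) * ((n : ℝ) + 1) / G) :
    (∀ θ ∈ Set.Ioo (0 : ℝ) π,
        deriv ψ θ / (Real.sin θ * deriv (deriv ψ) 0) = ∑' n : ℕ, c n * (Real.cos θ) ^ n) ∧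
      (∀ n, 0 ≤ c n) ∧ HasSum c 1 :=
  stmt_13_general b hb hpos hmom G hG ψ hψ c hc
end

section
/- For every integer ℓ ≥ 0, lim_{j→∞} (1/j) ∑_{n=1}^{j-1} f(n/j) = ∫_0^1 f(x) dx = (√π/2) · Γ((ℓ+1)/2)/Γ(ℓ/2 + 1), where f(x) = x^ℓ/√(1-x²). -/
/-!
The substitution `u = x²` turns `∫₀¹ x^ℓ / √(1 - x²) dx` into `½ B((ℓ + 1)/2, 1/2)`, and
`B(a, b) = Γ(a) Γ(b) / Γ(a + b)` with `Γ(1/2) = √π`.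

The integrand is increasing on `(0, 1)`, so on each cell of the partition by the points `n / j` it
lies between its values at the two ends of the cell. Comparing only with cells that avoid the
singularity at `1`, the Riemann sum is squeezed between `∫₀^{1 - 1/j} f` and `∫_{1/j}^1 f`, and both
tend to `∫₀¹ f` by continuity of the indefinite integral.
-/

open Real Filter MeasureTheory Set Topology

theorem ofReal_rpow_mul_one_sub_rpow {a b x : ℝ} (hx : x ∈ Icc (0 : ℝ) 1) :
    ((x ^ (a - 1) * (1 - x) ^ (b - 1) : ℝ) : ℂ) =
      (x : ℂ) ^ ((a : ℂ) - 1) * (1 - (x : ℂ)) ^ ((b : ℂ) - 1) := by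
  push_cast [Complex.ofReal_mul, Complex.ofReal_cpow hx.1, Complex.ofReal_cpow (sub_nonneg.2 hx.2)]
  rfl

theorem intervalIntegrable_rpow_mul_one_sub_rpow {a b : ℝ} (ha : 0 < a) (hb : 0 < b) :
    IntervalIntegrable (fun x : ℝ => x ^ (a - 1) * (1 - x) ^ (b - 1)) volume 0 1 := by
  have hC := Complex.betaIntegral_convergent (u := a) (v := b) (by simpa) (by simpa)
  rw [intervalIntegrable_iff, uIoc_of_le zero_le_one] at hC ⊢
  refine IntegrableOn.congr_fun hC.re (fun x hx => ?_) measurableSet_Ioc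
  simp only [← ofReal_rpow_mul_one_sub_rpow (Ioc_subset_Icc_self hx), RCLike.re_to_complex,
    Complex.ofReal_re]

theorem integral_rpow_mul_one_sub_rpow {a b : ℝ} (ha : 0 < a) (hb : 0 < b) :
    ∫ x in (0 : ℝ)..1, x ^ (a - 1) * (1 - x) ^ (b - 1) = Gamma a * Gamma b / Gamma (a + b) := by
  have hB : Complex.betaIntegral a b =
      ((∫ x in (0 : ℝ)..1, x ^ (a - 1) * (1 - x) ^ (b - 1) : ℝ) : ℂ) := by
    rw [Complex.betaIntegral, ← intervalIntegral.integral_ofReal]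
    refine intervalIntegral.integral_congr fun x hx => ?_
    rw [uIcc_of_le zero_le_one] at hx
    exact (ofReal_rpow_mul_one_sub_rpow hx).symm
  rw [← ProbabilityTheory.beta, ProbabilityTheory.beta_eq_betaIntegralReal a b ha hb, hB,
    Complex.ofReal_re]

theorem image_sq_Ioo_zero_one : (fun x : ℝ => x ^ 2) '' Ioo 0 1 = Ioo 0 1 := by
  ext y
  constructor
  · rintro ⟨x, ⟨hx0, hx1⟩, rfl⟩
    exact ⟨by positivity, by nlinarith⟩
  · rintro ⟨hy0, hy1⟩
    exact ⟨√y, ⟨sqrt_pos.2 hy0, (sqrt_lt' one_pos).2 (by simpa using hy1)⟩, sq_sqrt hy0.le⟩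

section SqSubstitution

variable {E : Type*} [NormedAddCommGroup E] [NormedSpace ℝ E] (g : ℝ → E)

theorem hasDerivWithinAt_sq_Ioo :
    ∀ x ∈ Ioo (0 : ℝ) 1, HasDerivWithinAt (fun x : ℝ => x ^ 2) (2 * x) (Ioo 0 1) x :=
  fun x _ => by simpa using (hasDerivAt_pow 2 x).hasDerivWithinAt

theorem injOn_sq_Ioo : InjOn (fun x : ℝ => x ^ 2) (Ioo 0 1) :=
  fun _ ha _ hb h => (sq_eq_sq₀ ha.1.le hb.1.le).1 h

theorem abs_deriv_sq_smul_eqOn :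
    EqOn (fun x : ℝ => |2 * x| • g (x ^ 2)) (fun x => (2 * x) • g (x ^ 2)) (Ioo 0 1) :=
  fun x hx => by simp only [abs_of_pos (by linarith [hx.1] : 0 < 2 * x)]

theorem integrableOn_Ioo_zero_one_iff_comp_sq :
    IntegrableOn g (Ioo 0 1) ↔ IntegrableOn (fun x => (2 * x) • g (x ^ 2)) (Ioo 0 1) := by
  have h := integrableOn_image_iff_integrableOn_abs_deriv_smul measurableSet_Ioo
    hasDerivWithinAt_sq_Ioo injOn_sq_Ioo g
  rwa [image_sq_Ioo_zero_one, integrableOn_congr_fun (abs_deriv_sq_smul_eqOn g) measurableSet_Ioo]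
    at h

theorem setIntegral_Ioo_zero_one_eq_comp_sq :
    ∫ u in Ioo 0 1, g u = ∫ x in Ioo 0 1, (2 * x) • g (x ^ 2) := by
  have h := integral_image_eq_integral_abs_deriv_smul measurableSet_Ioo
    hasDerivWithinAt_sq_Ioo injOn_sq_Ioo g
  rwa [image_sq_Ioo_zero_one, setIntegral_congr_fun measurableSet_Ioo (abs_deriv_sq_smul_eqOn g)]
    at h

end SqSubstitution

theorem two_mul_smul_rpow_mul_one_sub_rpow_sq (ℓ : ℕ) {x : ℝ} (hx : x ∈ Ioo (0 : ℝ) 1) :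
    (2 * x) • ((x ^ 2) ^ (((ℓ : ℝ) + 1) / 2 - 1) * (1 - x ^ 2) ^ ((1 : ℝ) / 2 - 1)) =
      2 * (x ^ ℓ / √(1 - x ^ 2)) := by
  obtain ⟨hx0, hx1⟩ := hx
  have hpow : x * (x ^ 2) ^ (((ℓ : ℝ) + 1) / 2 - 1) = x ^ ℓ := by
    rw [← rpow_natCast x 2, ← rpow_mul hx0.le, mul_comm, ← rpow_add_one hx0.ne', ← rpow_natCast]
    congr 1
    push_cast
    ring
  have hsqrt : (1 - x ^ 2) ^ ((1 : ℝ) / 2 - 1) = (√(1 - x ^ 2))⁻¹ := by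
    rw [sqrt_eq_rpow, ← rpow_neg (by nlinarith)]
    norm_num
  rw [smul_eq_mul, hsqrt, ← hpow, div_eq_mul_inv]
  ring

theorem intervalIntegrable_pow_div_sqrt_one_sub_sq (ℓ : ℕ) :
    IntervalIntegrable (fun x : ℝ => x ^ ℓ / √(1 - x ^ 2)) volume 0 1 := by
  have hB := intervalIntegrable_rpow_mul_one_sub_rpow (a := ((ℓ : ℝ) + 1) / 2) (b := 1 / 2)
    (by positivity) (by norm_num)
  rw [intervalIntegrable_iff_integrableOn_Ioo_of_le zero_le_one] at hB ⊢
  have hsub := ((integrableOn_Ioo_zero_one_iff_comp_sq _).1 hB).const_mul (1 / 2)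
  refine IntegrableOn.congr_fun hsub (fun x hx => ?_) measurableSet_Ioo
  simp only [two_mul_smul_rpow_mul_one_sub_rpow_sq ℓ hx]
  ring

theorem integral_pow_div_sqrt_one_sub_sq (ℓ : ℕ) :
    ∫ x in (0 : ℝ)..1, x ^ ℓ / √(1 - x ^ 2) =
      √π * Gamma (((ℓ : ℝ) + 1) / 2) / (2 * Gamma ((ℓ : ℝ) / 2 + 1)) := by
  have hB := integral_rpow_mul_one_sub_rpow (a := ((ℓ : ℝ) + 1) / 2) (b := 1 / 2)
    (by positivity) (by norm_num)
  rw [intervalIntegral.integral_of_le zero_le_one, integral_Ioc_eq_integral_Ioo,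
    setIntegral_Ioo_zero_one_eq_comp_sq, setIntegral_congr_fun measurableSet_Ioo
      (fun x hx => two_mul_smul_rpow_mul_one_sub_rpow_sq ℓ hx), integral_const_mul,
    Gamma_one_half_eq, show ((ℓ : ℝ) + 1) / 2 + 1 / 2 = ℓ / 2 + 1 by ring] at hB
  rw [intervalIntegral.integral_of_le zero_le_one, integral_Ioc_eq_integral_Ioo]
  have hΓ : Gamma ((ℓ : ℝ) / 2 + 1) ≠ 0 := (Gamma_pos_of_pos (by positivity)).ne'
  rw [eq_div_iff (mul_ne_zero two_ne_zero hΓ), mul_left_comm, ← mul_assoc, hB]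
  field_simp

section RiemannSum

variable {F : ℝ → ℝ}

theorem MonotoneOn.intervalIntegral_le_mul {a b : ℝ} (hF : MonotoneOn F (Ioc a b)) (hab : a ≤ b)
    (hint : IntervalIntegrable F volume a b) : ∫ x in a..b, F x ≤ (b - a) * F b :=
  calc ∫ x in a..b, F x ≤ ∫ _ in a..b, F b :=
        intervalIntegral.integral_mono_on_of_le_Ioo hab hint intervalIntegrable_const
          fun x hx => hF (Ioo_subset_Ioc_self hx) (right_mem_Ioc.2 (hx.1.trans hx.2)) hx.2.le
    _ = (b - a) * F b := by rw [intervalIntegral.integral_const, smul_eq_mul]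

theorem MonotoneOn.mul_le_intervalIntegral {a b : ℝ} (hF : MonotoneOn F (Ico a b)) (hab : a ≤ b)
    (hint : IntervalIntegrable F volume a b) : (b - a) * F a ≤ ∫ x in a..b, F x :=
  calc (b - a) * F a = ∫ _ in a..b, F a := by rw [intervalIntegral.integral_const, smul_eq_mul]
    _ ≤ ∫ x in a..b, F x :=
        intervalIntegral.integral_mono_on_of_le_Ioo hab intervalIntegrable_const hint
          fun x hx => hF (left_mem_Ico.2 (hx.1.trans hx.2)) (Ioo_subset_Ico_self hx) hx.1.le

theorem natCast_div_add_one_mem_Icc {k m : ℕ} (hk : k ≤ m + 1) :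
    (k : ℝ) / (m + 1) ∈ Icc (0 : ℝ) 1 :=
  ⟨by positivity, div_le_one_of_le₀ (by exact_mod_cast hk) (by positivity)⟩

theorem natCast_div_add_one_mem_Ioo {k m : ℕ} (hk0 : 0 < k) (hk : k ≤ m) :
    (k : ℝ) / (m + 1) ∈ Ioo (0 : ℝ) 1 :=
  ⟨by positivity, (div_lt_one (by positivity)).2 (by exact_mod_cast Nat.lt_succ_of_le hk)⟩

theorem IntervalIntegrable.mono_natCast_div_add_one (hint : IntervalIntegrable F volume 0 1)
    {k l m : ℕ} (hk : k ≤ m + 1) (hl : l ≤ m + 1) :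
    IntervalIntegrable F volume ((k : ℝ) / (m + 1)) ((l : ℝ) / (m + 1)) :=
  hint.mono_set <| uIcc_subset_uIcc (Icc_subset_uIcc (natCast_div_add_one_mem_Icc hk))
    (Icc_subset_uIcc (natCast_div_add_one_mem_Icc hl))

theorem MonotoneOn.integral_le_riemannSum (hF : MonotoneOn F (Ioo 0 1))
    (hint : IntervalIntegrable F volume 0 1) (m : ℕ) :
    ∫ x in (0 : ℝ)..m / (m + 1), F x ≤
      1 / (m + 1) * ∑ k ∈ Finset.range m, F ((k + 1) / (m + 1)) := by
  set t : ℕ → ℝ := fun k => k / (m + 1)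
  have hcell : ∀ k < m, ∫ x in t k..t (k + 1), F x ≤ 1 / (m + 1) * F (t (k + 1)) := by
    intro k hk
    have hlen : t (k + 1) - t k = 1 / (m + 1) := by simp only [t]; push_cast; ring
    have hmono : t k ≤ t (k + 1) := by simp only [t]; gcongr; simp
    rw [← hlen]
    refine (hF.mono fun x hx => ⟨?_, ?_⟩).intervalIntegral_le_mul hmono
      (hint.mono_natCast_div_add_one (by omega) (by omega))
    · exact (natCast_div_add_one_mem_Icc (by omega)).1.trans_lt hx.1
    · exact hx.2.trans_lt (natCast_div_add_one_mem_Ioo k.succ_pos hk).2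
  calc ∫ x in (0 : ℝ)..m / (m + 1), F x
      = ∑ k ∈ Finset.range m, ∫ x in t k..t (k + 1), F x := by
        rw [intervalIntegral.sum_integral_adjacent_intervals fun k hk =>
          hint.mono_natCast_div_add_one (by omega) (by omega)]
        simp only [Nat.cast_zero, zero_div]
    _ ≤ ∑ k ∈ Finset.range m, 1 / (m + 1) * F (t (k + 1)) :=
        Finset.sum_le_sum fun k hk => hcell k (Finset.mem_range.1 hk)
    _ = 1 / (m + 1) * ∑ k ∈ Finset.range m, F ((k + 1) / (m + 1)) := by
        rw [Finset.mul_sum]; push_cast [t]; rfl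

theorem MonotoneOn.riemannSum_le_integral (hF : MonotoneOn F (Ioo 0 1))
    (hint : IntervalIntegrable F volume 0 1) (m : ℕ) :
    1 / (m + 1) * ∑ k ∈ Finset.range m, F ((k + 1) / (m + 1)) ≤
      ∫ x in 1 / (m + 1)..(1 : ℝ), F x := by
  set t : ℕ → ℝ := fun k => k / (m + 1)
  have hcell : ∀ k < m, 1 / (m + 1) * F (t (k + 1)) ≤ ∫ x in t (k + 1)..t (k + 2), F x := by
    intro k hk
    have hlen : t (k + 2) - t (k + 1) = 1 / (m + 1) := by simp only [t]; push_cast; ring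
    have hmono : t (k + 1) ≤ t (k + 2) := by simp only [t]; gcongr; simp
    rw [← hlen]
    refine (hF.mono fun x hx => ⟨?_, ?_⟩).mul_le_intervalIntegral hmono
      (hint.mono_natCast_div_add_one (by omega) (by omega))
    · exact (natCast_div_add_one_mem_Ioo k.succ_pos hk).1.trans_le hx.1
    · exact hx.2.trans_le (natCast_div_add_one_mem_Icc (by omega)).2
  calc 1 / (m + 1) * ∑ k ∈ Finset.range m, F ((k + 1) / (m + 1))
      = ∑ k ∈ Finset.range m, 1 / (m + 1) * F (t (k + 1)) := by
        rw [Finset.mul_sum]; push_cast [t]; rfl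
    _ ≤ ∑ k ∈ Finset.range m, ∫ x in t (k + 1)..t (k + 2), F x :=
        Finset.sum_le_sum fun k hk => hcell k (Finset.mem_range.1 hk)
    _ = ∫ x in 1 / (m + 1)..(1 : ℝ), F x := by
        rw [intervalIntegral.sum_integral_adjacent_intervals (a := fun k => t (k + 1)) fun k hk =>
          hint.mono_natCast_div_add_one (by omega) (by omega)]
        congr 1
        · simp [t]
        · simp only [t]; push_cast; exact div_self (by positivity)

theorem MonotoneOn.tendsto_riemannSum (hF : MonotoneOn F (Ioo 0 1))
    (hint : IntervalIntegrable F volume 0 1) :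
    Tendsto (fun j : ℕ => 1 / (j : ℝ) * ∑ n ∈ Finset.Icc 1 (j - 1), F (n / j)) atTop
      (𝓝 (∫ x in (0 : ℝ)..1, F x)) := by
  have hI : IntegrableOn F (uIcc 0 1) := (intervalIntegrable_iff' (f := F)).1 hint
  have hlower : Tendsto (fun m : ℕ => ∫ x in (0 : ℝ)..m / (m + 1), F x) atTop
      (𝓝 (∫ x in (0 : ℝ)..1, F x)) :=
    ((intervalIntegral.continuousOn_primitive_interval hI) 1 right_mem_uIcc).tendsto.comp <|
      tendsto_nhdsWithin_iff.2 ⟨tendsto_natCast_div_add_atTop 1, Eventually.of_forall fun m =>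
        Icc_subset_uIcc (natCast_div_add_one_mem_Icc m.le_succ)⟩
  have hupper : Tendsto (fun m : ℕ => ∫ x in 1 / (m + 1)..(1 : ℝ), F x) atTop
      (𝓝 (∫ x in (0 : ℝ)..1, F x)) :=
    ((intervalIntegral.continuousOn_primitive_interval_left hI) 0 left_mem_uIcc).tendsto.comp <|
      tendsto_nhdsWithin_iff.2 ⟨tendsto_one_div_add_atTop_nhds_zero_nat, Eventually.of_forall
        fun m => Icc_subset_uIcc
          (by simpa using natCast_div_add_one_mem_Icc (k := 1) (m := m) (by omega))⟩
  rw [← tendsto_add_atTop_iff_nat 1]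
  refine (tendsto_of_tendsto_of_tendsto_of_le_of_le hlower hupper
    (hF.integral_le_riemannSum hint) (hF.riemannSum_le_integral hint)).congr fun m => ?_
  rw [Nat.add_sub_cancel, ← Finset.Ico_add_one_right_eq_Icc, Finset.sum_Ico_eq_sum_range,
    Nat.add_sub_cancel]
  push_cast
  simp only [add_comm]

end RiemannSum

theorem monotoneOn_pow_div_sqrt_one_sub_sq (ℓ : ℕ) :
    MonotoneOn (fun x : ℝ => x ^ ℓ / √(1 - x ^ 2)) (Ioo 0 1) := by
  intro x hx y hy hxy
  exact div_le_div₀ (pow_nonneg hy.1.le ℓ) (pow_le_pow_left₀ hx.1.le hxy ℓ)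
    (sqrt_pos.2 (by nlinarith [hy.1, hy.2])) (sqrt_le_sqrt (by nlinarith [hx.1]))

theorem stmt_17 (ℓ : ℕ) (f : ℝ → ℝ) (hf : ∀ x, f x = x ^ ℓ / Real.sqrt (1 - x ^ 2)) :
    (∫ x in (0 : ℝ)..1, f x) =
        Real.sqrt π * Real.Gamma (((ℓ : ℝ) + 1) / 2) / (2 * Real.Gamma ((ℓ : ℝ) / 2 + 1)) ∧
      Filter.Tendsto (fun j : ℕ => (1 / (j : ℝ)) * ∑ n ∈ Finset.Icc 1 (j - 1), f ((n : ℝ) / j))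
        Filter.atTop (nhds (∫ x in (0 : ℝ)..1, f x)) := by
  obtain rfl : f = fun x => x ^ ℓ / √(1 - x ^ 2) := funext hf
  exact ⟨integral_pow_div_sqrt_one_sub_sq ℓ,
    (monotoneOn_pow_div_sqrt_one_sub_sq ℓ).tendsto_riemannSum
      (intervalIntegrable_pow_div_sqrt_one_sub_sq ℓ)⟩
end

section
/- The minimum of ∑_{n=0}^∞ b_n · n(n-1+d)/d over all sequences (b_n)_{n≥0} of nonnegative reals satisfying ∑_{n=0}^∞ b_n = 1 and ∑_{n=0}^∞ (-1)^n b_n = 0 equals 1/2, attained at b_0 = b_1 = 1/2 and b_n = 0 for n ≥ 2 (for any fixed integer d ≥ 1). -/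
open Real

/- Writing `1 = ∑ bₙ` and `0 = ∑ (-1)ⁿ bₙ`, the odd-indexed mass `∑ b_{2k+1}` is exactly `1/2`.
Since `n (n - 1 + d) / d` vanishes at `n = 0` and is `≥ 1` for `n ≥ 1` (as `(n - 1)(n + d) ≥ 0`),
the weighted sum dominates that odd mass; the sequence `b₀ = b₁ = 1/2` loses nothing. -/

theorem one_le_mul_sub_one_add_div {d x : ℝ} (hd : 0 < d) (hx : 1 ≤ x) :
    1 ≤ x * (x - 1 + d) / d := by
  rw [le_div_iff₀ hd]
  nlinarith

theorem half_le_of_hasSum_of_hasSum_neg_one_pow_mul {b w : ℕ → ℝ} {S : ℝ}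
    (hb : ∀ n, 0 ≤ b n) (hb_sum : HasSum b 1) (hb_alt : HasSum (fun n => (-1 : ℝ) ^ n * b n) 0)
    (hw_even : ∀ n, Even n → 0 ≤ w n) (hw_odd : ∀ n, Odd n → 1 ≤ w n)
    (hS : HasSum (fun n => b n * w n) S) : 1 / 2 ≤ S := by
  have h_odd_mass : HasSum (fun n => (b n - (-1 : ℝ) ^ n * b n) / 2) (1 / 2) := by
    simpa using (hb_sum.sub hb_alt).div_const 2
  refine hasSum_le (fun n => ?_) h_odd_mass hS
  rcases Nat.even_or_odd n with hn | hn
  · simpa [hn.neg_one_pow] using mul_nonneg (hb n) (hw_even n hn)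
  · simpa [hn.neg_one_pow] using le_mul_of_one_le_right (hb n) (hw_odd n hn)

theorem hasSum_ite_le_one_mul (f : ℕ → ℝ) :
    HasSum (fun n : ℕ => (if n ≤ 1 then (1 : ℝ) / 2 else 0) * f n) ((f 0 + f 1) / 2) := by
  have h_support : ∀ n ∉ Finset.range 2, (if n ≤ 1 then (1 : ℝ) / 2 else 0) * f n = 0 := by
    intro n hn
    simp only [Finset.mem_range, not_lt] at hn
    simp [show ¬ n ≤ 1 by omega]
  have h : HasSum _ _ := hasSum_sum_of_ne_finset_zero h_support
  rw [Finset.sum_range_succ, Finset.sum_range_one] at h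
  convert h using 1
  norm_num
  ring

theorem stmt_19 (d : ℕ) (hd : 1 ≤ d) :
    IsLeast
      {S : ℝ | ∃ b : ℕ → ℝ, (∀ n, 0 ≤ b n) ∧ HasSum b 1 ∧
        HasSum (fun n : ℕ => (-1 : ℝ) ^ n * b n) 0 ∧
        HasSum (fun n : ℕ => b n * ((n : ℝ) * ((n : ℝ) - 1 + d) / d)) S}
      (1 / 2) ∧
    HasSum (fun n : ℕ => (if n ≤ 1 then (1 : ℝ) / 2 else 0) * ((n : ℝ) * ((n : ℝ) - 1 + d) / d))
      (1 / 2) := by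
  have hd_pos : (0 : ℝ) < d := by exact_mod_cast hd
  have h_witness : HasSum (fun n : ℕ => (if n ≤ 1 then (1 : ℝ) / 2 else 0) *
      ((n : ℝ) * ((n : ℝ) - 1 + d) / d)) (1 / 2) := by
    convert hasSum_ite_le_one_mul _ using 1
    field_simp
    norm_num
  refine ⟨⟨⟨_, fun n => by positivity, ?_, ?_, h_witness⟩, ?_⟩, h_witness⟩
  · simpa using hasSum_ite_le_one_mul 1
  · simpa [mul_comm] using hasSum_ite_le_one_mul fun n => (-1 : ℝ) ^ n
  · rintro S ⟨b, hb, hb_sum, hb_alt, hS⟩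
    refine half_le_of_hasSum_of_hasSum_neg_one_pow_mul hb hb_sum hb_alt (fun n _ => ?_)
      (fun n hn => one_le_mul_sub_one_add_div hd_pos ?_) hS
    · have : (0 : ℝ) ≤ n - 1 + d := by linarith [(by exact_mod_cast hd : (1 : ℝ) ≤ d)]
      positivity
    · exact_mod_cast hn.pos
end
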